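/- arXiv:0902.2993 — 2 statements merged into one kernel-verified Lean document; each statement's English description precedes it below -/
import Mathlib

section
/- The metric space (Z, d_∞), where Z = {1,…,N}^ℕ with a = N^{-1/m}, has strictly positive m-dimensional Hausdorff measure: ℋ^m(Z) ≥ 2^{-m} a^{2m} ω_m > 0. -/
open MeasureTheory

/- The ultrametric `d_∞` on `Z = {1,…,N}^ℕ` (modeled as `ℕ → Fin N`). -/
open Classical in
noncomputable def dinf {N : ℕ} (a : ℝ) (z z' : ℕ → Fin N) : ℝ :=
  if h : z = z' then 0 else a ^ Nat.find (Function.ne_iff.mp h)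

/-- Type synonym for the sequence space `Z = {1,…,N}^ℕ`. -/
def SeqSpace (N : ℕ) : Type := ℕ → Fin N

/-- The volume `ω_m` of the unit ball in `ℝ^m`. -/
noncomputable def omegaBall (m : ℕ) : ENNReal :=
  MeasureTheory.volume (Metric.ball (0 : EuclideanSpace ℝ (Fin m)) 1)

/-! The uniform product (Bernoulli) measure `ν` on `Z` gives mass `N⁻ᵏ = (aᵏ)ᵐ` to every ball
of radius `aᵏ`, since these balls are the cylinders of depth `k`. A set of diameter `D ≤ 1` with
`aᵏ⁺¹ < D ≤ aᵏ` lies in such a ball, so `aᵐ ν(s) ≤ Dᵐ`, and the mass distribution principle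
gives `ℋᵐ(Z) ≥ aᵐ ν(Z) = aᵐ ≥ a²ᵐ`. -/

open Metric Filter Topology ENNReal

lemma dinf_le_pow_iff {N : ℕ} {a : ℝ} (ha0 : 0 < a) (ha1 : a < 1) (z w : ℕ → Fin N) (k : ℕ) :
    dinf a z w ≤ a ^ k ↔ ∀ i < k, z i = w i := by
  unfold dinf
  split_ifs with h
  · simp [h, (pow_pos ha0 k).le]
  · rw [pow_le_pow_iff_right_of_lt_one₀ ha0 ha1, Nat.le_find_iff]
    exact forall₂_congr fun i _ => not_not

section MassDistribution

variable {X : Type*} [MeasurableSpace X]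

lemma measure_le_of_ediam_le [PseudoMetricSpace X] {ν : Measure X} {s : Set X}
    (hs : s.Nonempty) {ρ : ℝ} (hρ : 0 ≤ ρ) (hdiam : ediam s ≤ ENNReal.ofReal ρ) :
    ν s ≤ ⨆ x, ν (closedBall x ρ) := by
  obtain ⟨x, hx⟩ := hs
  refine (measure_mono fun y hy => ?_).trans (le_iSup (fun x => ν (closedBall x ρ)) x)
  exact (edist_le_ofReal hρ).mp ((edist_le_ediam_of_mem hy hx).trans hdiam)

theorem smul_le_hausdorffMeasure_of_measure_closedBall_le [MetricSpace X] [BorelSpace X]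
    (ν : Measure X) {r d : ℝ} (hr0 : 0 < r) (hr1 : r < 1) (hd : 0 < d)
    (hν : ∀ x (k : ℕ), ν (closedBall x (r ^ k)) ≤ ENNReal.ofReal (r ^ k) ^ d) :
    ENNReal.ofReal r ^ d • ν ≤ μH[d] := by
  refine Measure.le_hausdorffMeasure d _ 1 one_pos fun s hs => ?_
  rcases s.eq_empty_or_nonempty with rfl | hne
  · simp
  have hpow : ∀ k : ℕ, ediam s ≤ ENNReal.ofReal (r ^ k) → ν s ≤ ENNReal.ofReal (r ^ k) ^ d :=
    fun k hk => (measure_le_of_ediam_le hne (pow_pos hr0 k).le hk).trans (iSup_le (hν · k))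
  have hdiam : ediam s = ENNReal.ofReal (ediam s).toReal :=
    (ofReal_toReal (hs.trans_lt one_lt_top).ne).symm
  rw [Measure.smul_apply, smul_eq_mul]
  rcases eq_or_ne (ediam s) 0 with h0 | h0
  · have hgeom : ∀ k : ℕ, ν s ≤ (ENNReal.ofReal r ^ d) ^ k := fun k => by
      rw [← rpow_mul_natCast, mul_comm, rpow_natCast_mul, ← ofReal_pow hr0.le]
      exact hpow k (by simp [h0])
    have hlt : ENNReal.ofReal r ^ d < 1 := rpow_lt_one (ofReal_lt_one.mpr hr1) hd
    simp [le_antisymm (ge_of_tendsto' (tendsto_pow_atTop_nhds_zero_of_lt_one hlt) hgeom) bot_le]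
  · obtain ⟨k, hk1, hk2⟩ := exists_nat_pow_near_of_lt_one
      (toReal_pos h0 (hs.trans_lt one_lt_top).ne) (by simpa using toReal_mono one_ne_top hs)
      hr0 hr1
    calc ENNReal.ofReal r ^ d * ν s
        ≤ ENNReal.ofReal r ^ d * ENNReal.ofReal (r ^ k) ^ d := by
          gcongr
          exact hpow k (hdiam ▸ ofReal_le_ofReal hk2)
      _ = ENNReal.ofReal (r ^ (k + 1)) ^ d := by
          rw [← mul_rpow_of_nonneg _ _ hd.le, ← ofReal_mul hr0.le, pow_succ']
      _ ≤ ediam s ^ d := by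
          rw [hdiam]
          gcongr

end MassDistribution

noncomputable def bernoulliMeasure (N : ℕ) [NeZero N] : Measure (ℕ → Fin N) :=
  Measure.infinitePi fun _ => (PMF.uniformOfFintype (Fin N)).toMeasure

instance (N : ℕ) [NeZero N] : IsProbabilityMeasure (bernoulliMeasure N) := by
  unfold bernoulliMeasure
  infer_instance

lemma bernoulliMeasure_cylinder (N : ℕ) [NeZero N] (z : ℕ → Fin N) (k : ℕ) :
    bernoulliMeasure N (Set.pi (Finset.range k : Set ℕ) fun i => {z i}) = (N : ℝ≥0∞)⁻¹ ^ k := by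
  rw [bernoulliMeasure, Measure.infinitePi_pi _ fun _ _ => measurableSet_singleton _]
  simp [PMF.toMeasure_apply_singleton _ _ (measurableSet_singleton _)]

/-- The identity, from the product topology to the `d_∞`-topology of `SeqSpace N`. -/
def SeqSpace.ofFun {N : ℕ} (z : ℕ → Fin N) : SeqSpace N := z

section SeqSpace

variable {N : ℕ} {a : ℝ} [MetricSpace (SeqSpace N)]
  (hdist : ∀ z z' : SeqSpace N, dist z z' = dinf a z z')
include hdist

lemma closedBall_pow_eq_cylinder (ha0 : 0 < a) (ha1 : a < 1) (z : SeqSpace N) (k : ℕ) :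
    closedBall z (a ^ k) = Set.pi (Finset.range k : Set ℕ) fun i => {z i} := by
  ext w
  change dist w z ≤ a ^ k ↔ ∀ i ∈ (Finset.range k : Set ℕ), w i ∈ ({z i} : Set (Fin N))
  rw [hdist]
  exact (dinf_le_pow_iff ha0 ha1 w z k).trans (by simp)

lemma continuous_seqSpace_ofFun (ha0 : 0 < a) (ha1 : a < 1) :
    Continuous (SeqSpace.ofFun (N := N)) := by
  refine Metric.continuous_iff'.mpr fun z ε hε => ?_
  obtain ⟨k, hk⟩ := exists_pow_lt_of_lt_one hε ha1
  have hcoord : ∀ i, ∀ᶠ w in 𝓝 z, w i = z i := fun i =>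
    tendsto_pure.mp <|
      nhds_discrete (Fin N) ▸ (continuous_apply (A := fun _ : ℕ => Fin N) i).tendsto z
  filter_upwards [(Finset.range k).eventually_all.mpr fun i _ => hcoord i] with w hw
  refine lt_of_le_of_lt ?_ hk
  rw [hdist]
  exact (dinf_le_pow_iff ha0 ha1 w z k).mpr (by simpa using hw)

variable [MeasurableSpace (SeqSpace N)] [BorelSpace (SeqSpace N)] [NeZero N]

lemma map_bernoulliMeasure_closedBall_pow (ha0 : 0 < a) (ha1 : a < 1) (z : SeqSpace N) (k : ℕ) :
    (bernoulliMeasure N).map SeqSpace.ofFun (closedBall z (a ^ k)) = (N : ℝ≥0∞)⁻¹ ^ k := by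
  rw [Measure.map_apply (continuous_seqSpace_ofFun hdist ha0 ha1).measurable
    measurableSet_closedBall, closedBall_pow_eq_cylinder hdist ha0 ha1]
  exact bernoulliMeasure_cylinder N z k

theorem ofReal_pow_le_hausdorffMeasure_univ {m : ℕ} (hm : 0 < m) (ha0 : 0 < a) (ha1 : a < 1)
    (haN : a ^ m = (N : ℝ)⁻¹) :
    ENNReal.ofReal (a ^ m) ≤ μH[(m : ℝ)] (Set.univ : Set (SeqSpace N)) := by
  have hmeas := (continuous_seqSpace_ofFun hdist ha0 ha1).measurable
  have hball (z : SeqSpace N) (k : ℕ) :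
      (bernoulliMeasure N).map SeqSpace.ofFun (closedBall z (a ^ k))
        ≤ ENNReal.ofReal (a ^ k) ^ (m : ℝ) := by
    rw [map_bernoulliMeasure_closedBall_pow hdist ha0 ha1, rpow_natCast,
      ← ofReal_pow (pow_pos ha0 k).le, ← pow_mul, mul_comm, pow_mul, haN,
      ofReal_pow (by positivity), ofReal_inv_of_pos (Nat.cast_pos.mpr (NeZero.pos N)),
      ofReal_natCast]
  have hH := Measure.le_iff'.mp (smul_le_hausdorffMeasure_of_measure_closedBall_le _ ha0 ha1
    (by exact_mod_cast hm) hball) Set.univ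
  rwa [Measure.smul_apply, Measure.map_apply hmeas .univ, Set.preimage_univ, measure_univ,
    smul_eq_mul, mul_one, rpow_natCast, ← ofReal_pow ha0.le] at hH

end SeqSpace

/-- the metric space `(Z, d_∞)` with `a = N^{-1/m}` has strictly
positive `m`-dimensional Hausdorff measure: `ℋ^m(Z) ≥ 2^{-m} a^{2m} ω_m > 0`.
(The paper's Hausdorff measure equals `(ω_m / 2^m)` times Mathlib's `μH[m]`.) -/
theorem hausdorffMeasure_pos (N m : ℕ) (hN : 2 ≤ N) (hm : 2 ≤ m) (a : ℝ)
    (ha : a = (N : ℝ) ^ (-(1 : ℝ) / m))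
    [MetricSpace (SeqSpace N)] [MeasurableSpace (SeqSpace N)] [BorelSpace (SeqSpace N)]
    (hdist : ∀ z z' : SeqSpace N, dist z z' = dinf a z z') :
    ENNReal.ofReal (a ^ (2 * m)) * omegaBall m / 2 ^ m ≤
        (omegaBall m / 2 ^ m) * μH[(m : ℝ)] (Set.univ : Set (SeqSpace N)) ∧
      0 < ENNReal.ofReal (a ^ (2 * m)) * omegaBall m / 2 ^ m := by
  have : NeZero N := ⟨by omega⟩
  have hN1 : (1 : ℝ) < N := by exact_mod_cast hN
  have ha0 : 0 < a := ha ▸ Real.rpow_pos_of_pos (by positivity) _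
  have ha1 : a < 1 := ha ▸ Real.rpow_lt_one_of_one_lt_of_neg hN1
    (div_neg_of_neg_of_pos (by norm_num) (by exact_mod_cast (by omega : 0 < m)))
  have haN : a ^ m = (N : ℝ)⁻¹ := by
    rw [ha, neg_div, one_div, Real.rpow_neg (Nat.cast_nonneg N), inv_pow,
      Real.rpow_inv_natCast_pow (Nat.cast_nonneg N) (by omega)]
  have hH := ofReal_pow_le_hausdorffMeasure_univ hdist (by omega) ha0 ha1 haN
  have ha2m : a ^ (2 * m) ≤ a ^ m := pow_le_pow_of_le_one ha0.le ha1.le (by omega)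
  have hω : omegaBall m ≠ 0 := (measure_ball_pos volume 0 one_pos).ne'
  constructor
  · rw [mul_comm (ENNReal.ofReal _), ENNReal.mul_div_right_comm]
    gcongr
    exact (ofReal_le_ofReal ha2m).trans hH
  · exact ENNReal.div_pos (mul_ne_zero (by simpa using pow_pos ha0 _) hω)
      (pow_ne_top ofNat_ne_top)
end

section
/- In an ultrametric space (Z, d), there is no map φ from a subset K' of a normed space (ℝ^m, ‖·‖) to Z that is an approximate isometry around a point x which is a density point of K': more precisely, if for every ε > 0 there exist x', x'' ∈ K' with ‖x − x'‖ < ε, ‖x − x''‖ ≤ (3/4)‖x − x'‖, and ‖x' − x''‖ ≤ (3/4)‖x − x'‖, then φ cannot satisfy (1−δ)‖u−v‖ ≤ d(φ(u),φ(v)) ≤ (1+δ)‖u−v‖ near x for small δ with the ultrametric constraint that distances take values only in {a^k : k ∈ ℕ} ∪ {0} with a ∈ (0,1). -/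
/-!
In an ultrametric space the longest side of a triangle is attained twice. Pick `x', x''` near `x`
with `x''` within `3/4 ‖x - x'‖` of both `x` and `x'`. An approximate isometry `φ` with constant
`δ` would give `(1 - δ) ‖x - x'‖ ≤ d(φ x, φ x') ≤ max (d(φ x, φ x''), d(φ x', φ x''))
≤ (1 + δ) (3/4) ‖x - x'‖`, which fails as soon as `δ < 1/7`.
-/

open Metric

lemma IsUltrametricDist.of_dist_le_max {Z : Type*} [PseudoMetricSpace Z]
    (h : ∀ z z' z'' : Z, dist z z' ≤ max (dist z z'') (dist z' z'')) : IsUltrametricDist Z :=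
  ⟨fun x y z => dist_comm z y ▸ h x z y⟩

lemma dist_image_le_max_of_ultrametric {X Z : Type*} [Dist X] [PseudoMetricSpace Z]
    [IsUltrametricDist Z] {f : X → Z} {L : ℝ} {x y w : X}
    (hxw : dist (f x) (f w) ≤ L * dist x w) (hyw : dist (f y) (f w) ≤ L * dist y w) :
    dist (f x) (f y) ≤ max (L * dist x w) (L * dist y w) :=
  (IsUltrametricDist.dist_triangle_max (f x) (f w) (f y)).trans <|
    max_le_max hxw (dist_comm (f w) (f y) ▸ hyw)

theorem not_approximate_isometry_of_short_sides {X Z : Type*} [MetricSpace X]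
    [PseudoMetricSpace Z] [IsUltrametricDist Z] {s : Set X} {f : X → Z} {δ c : ℝ}
    (hf : ∀ u ∈ s, ∀ v ∈ s,
      (1 - δ) * dist u v ≤ dist (f u) (f v) ∧ dist (f u) (f v) ≤ (1 + δ) * dist u v)
    (hδc : (1 + δ) * c < 1 - δ) {x y w : X} (hx : x ∈ s) (hy : y ∈ s) (hw : w ∈ s)
    (hxy : x ≠ y) (hxw : dist x w ≤ c * dist x y) (hyw : dist y w ≤ c * dist x y) : False := by
  have hd : 0 < dist x y := dist_pos.mpr hxy
  have hδ : 0 ≤ 1 + δ := by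
    have := (hf x hx y hy).2
    nlinarith [dist_nonneg (x := f x) (y := f y)]
  have : (1 - δ) * dist x y ≤ (1 + δ) * c * dist x y :=
    calc (1 - δ) * dist x y ≤ dist (f x) (f y) := (hf x hx y hy).1
      _ ≤ max ((1 + δ) * dist x w) ((1 + δ) * dist y w) :=
        dist_image_le_max_of_ultrametric (hf x hx w hw).2 (hf y hy w hw).2
      _ ≤ (1 + δ) * c * dist x y := by
        rw [mul_assoc]
        exact max_le (mul_le_mul_of_nonneg_left hxw hδ) (mul_le_mul_of_nonneg_left hyw hδ)
  nlinarith

theorem no_approximate_isometry_into_ultrametric_general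
    {E : Type*} [NormedAddCommGroup E]
    {Z : Type*} [MetricSpace Z]
    (hult : ∀ z z' z'' : Z, dist z z' ≤ max (dist z z'') (dist z' z''))
    (K' : Set E) (x : E) (hx : x ∈ K')
    (hdens : ∀ ε : ℝ, 0 < ε → ∃ x' x'' : E, x' ∈ K' ∧ x'' ∈ K' ∧ x' ≠ x ∧
      ‖x - x'‖ < ε ∧ ‖x - x''‖ ≤ 3 / 4 * ‖x - x'‖ ∧ ‖x' - x''‖ ≤ 3 / 4 * ‖x - x'‖)
    (δ r : ℝ) (hδ : δ < 1 / 7) (hr : 0 < r) (φ : E → Z)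
    (hφ : ∀ u ∈ K' ∩ Metric.ball x r, ∀ v ∈ K' ∩ Metric.ball x r,
      (1 - δ) * ‖u - v‖ ≤ dist (φ u) (φ v) ∧ dist (φ u) (φ v) ≤ (1 + δ) * ‖u - v‖) :
    False := by
  have := IsUltrametricDist.of_dist_le_max hult
  obtain ⟨x', x'', hx', hx'', hne, hx'r, hx''x, hx''x'⟩ := hdens r hr
  simp only [← dist_eq_norm] at hφ hx'r hx''x hx''x'
  have hx''r : dist x x'' < r := by linarith [dist_nonneg (x := x) (y := x')]
  exact not_approximate_isometry_of_short_sides (s := K' ∩ ball x r) hφ (by linarith)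
    ⟨hx, mem_ball_self hr⟩ ⟨hx', mem_ball_comm.mp hx'r⟩ ⟨hx'', mem_ball_comm.mp hx''r⟩
    hne.symm hx''x hx''x'

/-- in an ultrametric space `(Z, d)` whose distances take values in
`{a^k : k ≥ 1} ∪ {0}` with `a ∈ (0,1)`, there is no map `φ` from a subset `K'` of a
normed space which is an approximate isometry (with small distortion `δ`) near a
point `x` around which there are points `x', x''` of `K'` with
`‖x−x''‖ ≤ (3/4)‖x−x'‖` and `‖x'−x''‖ ≤ (3/4)‖x−x'‖` at all small scales. -/
theorem no_approximate_isometry_into_ultrametric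
    {E : Type*} [NormedAddCommGroup E] [NormedSpace ℝ E]
    {Z : Type*} [MetricSpace Z]
    (hult : ∀ z z' z'' : Z, dist z z' ≤ max (dist z z'') (dist z' z''))
    (a : ℝ) (ha0 : 0 < a) (ha1 : a < 1)
    (hvals : ∀ z z' : Z, dist z z' = 0 ∨ ∃ k : ℕ, 1 ≤ k ∧ dist z z' = a ^ k)
    (K' : Set E) (x : E) (hx : x ∈ K')
    (hdens : ∀ ε : ℝ, 0 < ε → ∃ x' x'' : E, x' ∈ K' ∧ x'' ∈ K' ∧ x' ≠ x ∧
      ‖x - x'‖ < ε ∧ ‖x - x''‖ ≤ 3 / 4 * ‖x - x'‖ ∧ ‖x' - x''‖ ≤ 3 / 4 * ‖x - x'‖)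
    (δ r : ℝ) (hδ0 : 0 < δ) (hδ : δ < 1 / 7) (hr : 0 < r) (φ : E → Z)
    (hφ : ∀ u ∈ K' ∩ Metric.ball x r, ∀ v ∈ K' ∩ Metric.ball x r,
      (1 - δ) * ‖u - v‖ ≤ dist (φ u) (φ v) ∧ dist (φ u) (φ v) ≤ (1 + δ) * ‖u - v‖) :
    False :=
  no_approximate_isometry_into_ultrametric_general hult K' x hx hdens δ r hδ hr φ hφ
end
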